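/- arXiv:2504.11821 — 7 statements merged into one kernel-verified Lean document; each statement's English description precedes it below -/
import Mathlib

section
/- Let f : (0,∞) → ℝ be convex with f(1) = 0 and suppose that x ↦ f(x) + ln(1+x) is convex on (0,∞). Let P be a probability mass function on ℝ whose support is symmetric (P(φ) > 0 if and only if P(−φ) > 0). Then D_f[P(Φ) ∥ P(−Φ)] + Λ[P(Φ)] ≥ (1 − P(0)) · ln 2, where P(−Φ) denotes the pmf φ ↦ P(−φ). -/
open scoped BigOperators

noncomputable def negEquivAux : (Set.Ioi (0:ℝ)) ≃ (Set.Iio (0:ℝ)) where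
  toFun x := ⟨-x, Set.mem_Iio.mpr (neg_lt_zero.mpr x.2)⟩
  invFun x := ⟨-x, Set.mem_Ioi.mpr (neg_pos.mpr x.2)⟩
  left_inv x := by simp
  right_inv x := by simp

lemma summable_posPart (h : ℝ → ℝ) (hs : Summable h) :
    Summable (fun φ : Set.Ioi (0:ℝ) => h ↑φ) := hs.subtype _

lemma summable_negPart (h : ℝ → ℝ) (hs : Summable h) :
    Summable (fun φ : Set.Ioi (0:ℝ) => h (-(φ:ℝ))) := by
  have h1 : Summable (fun x : Set.Iio (0:ℝ) => h ↑x) := hs.subtype _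
  exact h1.comp_injective negEquivAux.injective

lemma tsum_decomp (h : ℝ → ℝ) (hs : Summable h) :
    ∑' x : ℝ, h x = h 0 + ∑' φ : Set.Ioi (0:ℝ), (h ↑φ + h (-(φ:ℝ))) := by
  have h2 : ∑' φ : Set.Ioi (0:ℝ), h (-(φ:ℝ)) = ∑' x : Set.Iio (0:ℝ), h ↑x :=
    negEquivAux.tsum_eq (fun x : Set.Iio (0:ℝ) => h ↑x)
  have h1 : ∑' φ : Set.Ioi (0:ℝ), (h ↑φ + h (-(φ:ℝ)))
      = (∑' φ : Set.Ioi (0:ℝ), h ↑φ) + ∑' φ : Set.Ioi (0:ℝ), h (-(φ:ℝ)) :=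
    Summable.tsum_add (summable_posPart h hs) (summable_negPart h hs)
  have huniv : (Set.univ : Set ℝ) = {0} ∪ (Set.Ioi 0 ∪ Set.Iio 0) := by
    ext x
    simp only [Set.mem_univ, Set.mem_union, Set.mem_singleton_iff, Set.mem_Ioi, Set.mem_Iio,
      true_iff]
    rcases lt_trichotomy x 0 with h | h | h
    · exact Or.inr (Or.inr h)
    · exact Or.inl h
    · exact Or.inr (Or.inl h)
  have hd1 : Disjoint ({0} : Set ℝ) (Set.Ioi 0 ∪ Set.Iio 0) := by
    simp [Set.disjoint_left]
  have hd2 : Disjoint (Set.Ioi (0:ℝ)) (Set.Iio 0) := by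
    simp only [Set.disjoint_left, Set.mem_Ioi, Set.mem_Iio]
    intro a ha; linarith
  calc ∑' x : ℝ, h x = ∑' x : (Set.univ : Set ℝ), h ↑x := (tsum_univ h).symm
    _ = ∑' x : (({0} ∪ (Set.Ioi 0 ∪ Set.Iio 0)) : Set ℝ), h ↑x := by rw [← huniv]
    _ = (∑' x : ({0}:Set ℝ), h ↑x) + ∑' x : ((Set.Ioi 0 ∪ Set.Iio 0) : Set ℝ), h ↑x := by
        apply Summable.tsum_union_disjoint hd1 (hs.subtype _) (hs.subtype _)
    _ = h 0 + ((∑' x : Set.Ioi (0:ℝ), h ↑x) + ∑' x : Set.Iio (0:ℝ), h ↑x) := by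
        rw [Summable.tsum_union_disjoint hd2 (hs.subtype _) (hs.subtype _), tsum_singleton]
    _ = h 0 + ∑' φ : Set.Ioi (0:ℝ), (h ↑φ + h (-(φ:ℝ))) := by rw [h1, h2]

lemma key_pointwise (f : ℝ → ℝ) (hf1 : f 1 = 0)
    (hconv : ConvexOn ℝ (Set.Ioi (0 : ℝ)) (fun x => f x + Real.log (1 + x)))
    (p q : ℝ) (hp : 0 ≤ p) (hq : 0 ≤ q) (hiff : 0 < p ↔ 0 < q) :
    (p + q) * Real.log 2
      ≤ (q * f (p / q) + p * f (q / p))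
        + ((p + q) * Real.log (p + q) - p * Real.log p - q * Real.log q) := by
  rcases eq_or_lt_of_le hp with hp0 | hp0
  · have hq0 : q = 0 := by
      by_contra h
      exact absurd (hiff.mpr (lt_of_le_of_ne hq (Ne.symm h))) (by simp [← hp0])
    simp [← hp0, hq0]
  · have hq0 : 0 < q := hiff.mp hp0
    have hpq : 0 < p + q := by linarith
    have hx : p / q ∈ Set.Ioi (0:ℝ) := Set.mem_Ioi.mpr (div_pos hp0 hq0)
    have hy : q / p ∈ Set.Ioi (0:ℝ) := Set.mem_Ioi.mpr (div_pos hq0 hp0)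
    have ha : (0:ℝ) ≤ q / (p + q) := by positivity
    have hb : (0:ℝ) ≤ p / (p + q) := by positivity
    have hab : q / (p + q) + p / (p + q) = 1 := by field_simp <;> ring
    have hcomb := hconv.2 hx hy ha hb hab
    have hpt : (q / (p + q)) • (p / q) + (p / (p + q)) • (q / p) = 1 := by
      simp only [smul_eq_mul]
      field_simp <;> ring
    rw [hpt] at hcomb
    simp only [smul_eq_mul] at hcomb
    have hg1 : f 1 + Real.log (1 + 1) = Real.log 2 := by norm_num [hf1]
    rw [hg1] at hcomb
    have hmul := mul_le_mul_of_nonneg_left hcomb (le_of_lt hpq)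
    have e1 : (p + q) * (q / (p + q) * (f (p / q) + Real.log (1 + p / q))
        + p / (p + q) * (f (q / p) + Real.log (1 + q / p)))
        = q * (f (p / q) + Real.log (1 + p / q)) + p * (f (q / p) + Real.log (1 + q / p)) := by
      field_simp <;> ring
    rw [e1] at hmul
    have e2 : Real.log (1 + p / q) = Real.log (p + q) - Real.log q := by
      rw [show (1 + p / q) = (p + q) / q by field_simp <;> ring,
        Real.log_div (ne_of_gt hpq) (ne_of_gt hq0)]
    have e3 : Real.log (1 + q / p) = Real.log (p + q) - Real.log p := by
      rw [show (1 + q / p) = (p + q) / p by field_simp <;> ring,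
        Real.log_div (ne_of_gt hpq) (ne_of_gt hp0)]
    rw [e2, e3] at hmul
    nlinarith [hmul]


/-- Shannon entropy of a pmf `P` on `ℝ` (convention `0 · ln 0 = 0` is automatic
since `Real.log 0 = 0`). -/
noncomputable def shannonEntropy (P : ℝ → ℝ) : ℝ :=
  -∑' φ : ℝ, P φ * Real.log (P φ)

/-- Shannon entropy of the absolute-value distribution `P(|Φ|)`, with
`P(|Φ| = φ) = P(φ) + P(−φ)` for `φ > 0` and `P(|Φ| = 0) = P(0)`. -/
noncomputable def absEntropy (P : ℝ → ℝ) : ℝ :=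
  -(∑' φ : Set.Ioi (0 : ℝ), (P ↑φ + P (-(φ : ℝ))) * Real.log (P ↑φ + P (-(φ : ℝ))))
    - P 0 * Real.log (P 0)

/-- Symmetry entropy `Λ[P(Φ)] = H[P(Φ)] − H[P(|Φ|)]`. -/
noncomputable def symmetryEntropy (P : ℝ → ℝ) : ℝ :=
  shannonEntropy P - absEntropy P

/-- `f`-divergence `D_f[P ∥ Q] = Σ_x Q(x) f(P(x)/Q(x))`; terms with `Q(x) = 0`
are `0` automatically. -/
noncomputable def fDivergence (f : ℝ → ℝ) (P Q : ℝ → ℝ) : ℝ :=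
  ∑' x : ℝ, Q x * f (P x / Q x)

set_option maxHeartbeats 1000000 in
/-- if `f` is convex on `(0,∞)` with `f(1) = 0` and
`x ↦ f(x) + ln(1+x)` is convex on `(0,∞)`, and `P` is a pmf on `ℝ` with
symmetric support, then `D_f[P(Φ) ∥ P(−Φ)] + Λ[P(Φ)] ≥ (1 − P(0)) · ln 2`. -/
theorem fDivergence_add_symmetryEntropy_ge
    (f : ℝ → ℝ) (hf : ConvexOn ℝ (Set.Ioi (0 : ℝ)) f) (hf1 : f 1 = 0)
    (hconv : ConvexOn ℝ (Set.Ioi (0 : ℝ)) (fun x => f x + Real.log (1 + x)))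
    (P : ℝ → ℝ) (hP : ∀ φ, 0 ≤ P φ) (hPsummable : Summable P)
    (hPsum : ∑' φ : ℝ, P φ = 1)
    (hsym : ∀ φ, 0 < P φ ↔ 0 < P (-φ))
    (hH : Summable (fun φ : ℝ => P φ * Real.log (P φ)))
    (hHabs : Summable (fun φ : Set.Ioi (0 : ℝ) =>
      (P ↑φ + P (-(φ : ℝ))) * Real.log (P ↑φ + P (-(φ : ℝ)))))
    (hD : Summable (fun φ : ℝ => P (-φ) * f (P φ / P (-φ)))) :
    fDivergence f P (fun φ => P (-φ)) + symmetryEntropy P ≥ (1 - P 0) * Real.log 2 := by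
  have dD := tsum_decomp (fun x => P (-x) * f (P x / P (-x))) hD
  have dH := tsum_decomp (fun x => P x * Real.log (P x)) hH
  have dP := tsum_decomp P hPsummable
  simp only [neg_zero, neg_neg] at dD dH dP
  have hD0 : P 0 * f (P 0 / P 0) = 0 := by
    rcases (hP 0).eq_or_lt with h0 | h0
    · simp [← h0]
    · rw [div_self (ne_of_gt h0), hf1, mul_zero]
  rw [hD0] at dD
  have sD1 : Summable (fun φ : Set.Ioi (0:ℝ) => P (-(φ:ℝ)) * f (P ↑φ / P (-(φ:ℝ)))) :=
    summable_posPart _ hD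
  have sD2 : Summable (fun φ : Set.Ioi (0:ℝ) => P ↑φ * f (P (-(φ:ℝ)) / P ↑φ)) := by
    have := summable_negPart _ hD
    simpa using this
  have sH1 : Summable (fun φ : Set.Ioi (0:ℝ) => P ↑φ * Real.log (P ↑φ)) :=
    summable_posPart _ hH
  have sH2 : Summable (fun φ : Set.Ioi (0:ℝ) => P (-(φ:ℝ)) * Real.log (P (-(φ:ℝ)))) :=
    summable_negPart _ hH
  have sP1 : Summable (fun φ : Set.Ioi (0:ℝ) => P ↑φ) := summable_posPart _ hPsummable
  have sP2 : Summable (fun φ : Set.Ioi (0:ℝ) => P (-(φ:ℝ))) := summable_negPart _ hPsummable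
  -- pointwise inequality, summed
  have sG : Summable (fun φ : Set.Ioi (0:ℝ) =>
      (P (-(φ:ℝ)) * f (P ↑φ / P (-(φ:ℝ))) + P ↑φ * f (P (-(φ:ℝ)) / P ↑φ))
        + ((P ↑φ + P (-(φ:ℝ))) * Real.log (P ↑φ + P (-(φ:ℝ)))
            - P ↑φ * Real.log (P ↑φ) - P (-(φ:ℝ)) * Real.log (P (-(φ:ℝ))))) :=
    (sD1.add sD2).add ((hHabs.sub sH1).sub sH2)
  have MAIN : ∑' φ : Set.Ioi (0:ℝ), ((P ↑φ + P (-(φ:ℝ))) * Real.log 2)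
      ≤ ∑' φ : Set.Ioi (0:ℝ),
        ((P (-(φ:ℝ)) * f (P ↑φ / P (-(φ:ℝ))) + P ↑φ * f (P (-(φ:ℝ)) / P ↑φ))
          + ((P ↑φ + P (-(φ:ℝ))) * Real.log (P ↑φ + P (-(φ:ℝ)))
              - P ↑φ * Real.log (P ↑φ) - P (-(φ:ℝ)) * Real.log (P (-(φ:ℝ))))) := by
    refine Summable.tsum_le_tsum (fun φ => ?_) ((sP1.add sP2).mul_right _) sG
    exact key_pointwise f hf1 hconv (P ↑φ) (P (-(φ:ℝ))) (hP _) (hP _) (hsym ↑φ)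
  have hG : ∑' φ : Set.Ioi (0:ℝ),
        ((P (-(φ:ℝ)) * f (P ↑φ / P (-(φ:ℝ))) + P ↑φ * f (P (-(φ:ℝ)) / P ↑φ))
          + ((P ↑φ + P (-(φ:ℝ))) * Real.log (P ↑φ + P (-(φ:ℝ)))
              - P ↑φ * Real.log (P ↑φ) - P (-(φ:ℝ)) * Real.log (P (-(φ:ℝ)))))
      = (∑' φ : Set.Ioi (0:ℝ), (P (-(φ:ℝ)) * f (P ↑φ / P (-(φ:ℝ))) + P ↑φ * f (P (-(φ:ℝ)) / P ↑φ)))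
        + ((∑' φ : Set.Ioi (0:ℝ), (P ↑φ + P (-(φ:ℝ))) * Real.log (P ↑φ + P (-(φ:ℝ))))
            - (∑' φ : Set.Ioi (0:ℝ), P ↑φ * Real.log (P ↑φ))
            - ∑' φ : Set.Ioi (0:ℝ), P (-(φ:ℝ)) * Real.log (P (-(φ:ℝ)))) := by
    rw [Summable.tsum_add (sD1.add sD2) ((hHabs.sub sH1).sub sH2), Summable.tsum_sub (hHabs.sub sH1) sH2,
      Summable.tsum_sub hHabs sH1]
  have dH2 : ∑' φ : Set.Ioi (0:ℝ), (P ↑φ * Real.log (P ↑φ) + P (-(φ:ℝ)) * Real.log (P (-(φ:ℝ))))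
      = (∑' φ : Set.Ioi (0:ℝ), P ↑φ * Real.log (P ↑φ))
        + ∑' φ : Set.Ioi (0:ℝ), P (-(φ:ℝ)) * Real.log (P (-(φ:ℝ))) := Summable.tsum_add sH1 sH2
  have h1mP : 1 - P 0 = ∑' φ : Set.Ioi (0:ℝ), (P ↑φ + P (-(φ:ℝ))) := by
    rw [← hPsum, dP]; ring
  have hMR : (∑' φ : Set.Ioi (0:ℝ), (P ↑φ + P (-(φ:ℝ)))) * Real.log 2
      = ∑' φ : Set.Ioi (0:ℝ), ((P ↑φ + P (-(φ:ℝ))) * Real.log 2) := (tsum_mul_right).symm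
  rw [ge_iff_le, h1mP, hMR]
  simp only [fDivergence, symmetryEntropy, shannonEntropy, absEntropy]
  rw [dD, dH, dH2]
  linarith [MAIN, hG]
end

section
/- Let Γ be a countable type, 𝒫 a probability mass function on Γ, and † : Γ → Γ an involution (the time reversal) such that 𝒫 is absolutely continuous with respect to the pushforward of 𝒫 under †. Let Φ : Γ → ℝ be anti-symmetric, i.e. Φ(γ†) = −Φ(γ) for all γ. Let f : (0,∞) → ℝ be convex with f(1) = 0 such that x ↦ f(x) + ln(1+x) is convex on (0,∞). Define the generalised entropy production Σ_f = D_f[𝒫(Γ) ∥ 𝒫(Γ†)] = Σ_γ 𝒫(γ†) f(𝒫(γ)/𝒫(γ†)), and let P(Φ) be the pmf of Φ under 𝒫, i.e. P(Φ = φ) = Σ_{γ : Φ(γ) = φ} 𝒫(γ). Then Σ_f ≥ (1 − P(Φ = 0)) · ln 2 − Λ[P(Φ)]. -/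
open scoped BigOperators

section Aux

private lemma aux_log_ge {y : ℝ} (hy : 0 < y) : 1 - 1/y ≤ Real.log y := by
  have h := Real.log_le_sub_one_of_pos (inv_pos.mpr hy)
  rw [Real.log_inv] at h
  rw [one_div]
  linarith

private lemma aux_summable_neg {F : ℝ → ℝ} (hF : Summable F) :
    Summable fun t : ℝ => F (-t) := by
  simpa [Function.comp_def] using (Equiv.neg ℝ).summable_iff.mpr hF

private lemma aux_hasSum_neg {F : ℝ → ℝ} {a : ℝ} (hF : HasSum F a) :
    HasSum (fun t : ℝ => F (-t)) a := by
  simpa [Function.comp_def] using (Equiv.neg ℝ).hasSum_iff.mpr hF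


private def aux_negIic (φ : Set.Ioi (0:ℝ)) : Set.Iic (0:ℝ) :=
  ⟨-φ.1, by have : (0:ℝ) < φ.1 := φ.2; simp only [Set.mem_Iic]; linarith⟩

private lemma aux_negIic_inj : Function.Injective aux_negIic := by
  intro a b h
  have : -a.1 = -b.1 := congrArg Subtype.val h
  exact Subtype.ext (by linarith)

private lemma aux_tsum_Iic {F : ℝ → ℝ} (h0 : F 0 = 0) :
    (∑' φ : Set.Ioi (0:ℝ), F (-↑φ)) = ∑' x : Set.Iic (0:ℝ), F ↑x := by
  exact Function.Injective.tsum_eq (f := fun x : Set.Iic (0:ℝ) => F ↑x) aux_negIic_inj (by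
    intro x hx
    have hx' : F ↑x ≠ 0 := hx
    have hx2 : x.1 ≤ 0 := x.2
    rcases lt_or_eq_of_le hx2 with h | h
    · exact ⟨⟨-x.1, by simp only [Set.mem_Ioi]; linarith⟩, Subtype.ext (by simp [aux_negIic])⟩
    · exact absurd (by rw [h]; exact h0) hx')

private lemma aux_summable_Iic {F : ℝ → ℝ} (h0 : F 0 = 0)
    (h : Summable fun φ : Set.Ioi (0:ℝ) => F (-↑φ)) :
    Summable fun x : Set.Iic (0:ℝ) => F ↑x := by
  refine (Function.Injective.summable_iff aux_negIic_inj ?_).mp h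
  intro x hx
  by_contra hne
  apply hx
  have hx2 : x.1 ≤ 0 := x.2
  rcases lt_or_eq_of_le hx2 with h' | h'
  · exact ⟨⟨-x.1, by simp only [Set.mem_Ioi]; linarith⟩, Subtype.ext (by simp [aux_negIic])⟩
  · exact absurd (by rw [h']; exact h0) hne

/-- summability of an ℝ-indexed family from its positive part, for functions
vanishing at 0, plus summability of the negative part. -/
private lemma aux_summable_real {G : ℝ → ℝ} (h0 : G 0 = 0)
    (hp : Summable fun φ : Set.Ioi (0:ℝ) => G ↑φ)
    (hn : Summable fun φ : Set.Ioi (0:ℝ) => G (-↑φ)) : Summable G := by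
  have hc : Summable fun x : ↥(Set.Ioi (0:ℝ))ᶜ => G ↑x := by
    rw [Set.compl_Ioi]
    exact aux_summable_Iic h0 hn
  exact Summable.add_compl (s := Set.Ioi (0:ℝ)) hp hc

private lemma aux_tsum_real {G : ℝ → ℝ} (h0 : G 0 = 0)
    (hp : Summable fun φ : Set.Ioi (0:ℝ) => G ↑φ)
    (hn : Summable fun φ : Set.Ioi (0:ℝ) => G (-↑φ)) :
    ∑' t : ℝ, G t = ∑' φ : Set.Ioi (0:ℝ), (G ↑φ + G (-↑φ)) := by
  have hc : Summable fun x : ↥(Set.Ioi (0:ℝ))ᶜ => G ↑x := by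
    rw [Set.compl_Ioi]; exact aux_summable_Iic h0 hn
  have h1 := Summable.tsum_add_tsum_compl (s := Set.Ioi (0:ℝ)) hp hc
  have h2 : (∑' x : ↥(Set.Ioi (0:ℝ))ᶜ, G ↑x) = ∑' φ : Set.Ioi (0:ℝ), G (-↑φ) := by
    rw [Set.compl_Ioi]
    exact (aux_tsum_Iic h0).symm
  rw [← h1, h2, Summable.tsum_add hp hn]

/-- splitting a summable real-indexed sum into 0, positive, negative parts -/
private lemma aux_tsum_split {F : ℝ → ℝ} (hF : Summable F) :
    ∑' t : ℝ, F t = F 0 + ∑' φ : Set.Ioi (0:ℝ), (F ↑φ + F (-↑φ)) := by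
  classical
  set F' : ℝ → ℝ := fun t => if t = 0 then 0 else F t with hF'def
  have hδ : HasSum (fun t : ℝ => if t = 0 then F 0 else 0) (F 0) := hasSum_ite_eq 0 (F 0)
  have hF' : Summable F' := by
    refine (hF.sub hδ.summable).congr fun t => ?_
    by_cases h : t = 0 <;> simp [hF'def, h]
  have e1 : ∑' t : ℝ, F t = F 0 + ∑' t : ℝ, F' t := Summable.tsum_eq_add_tsum_ite hF 0
  have hp : Summable fun φ : Set.Ioi (0:ℝ) => F' ↑φ := hF'.subtype _
  have hn : Summable fun φ : Set.Ioi (0:ℝ) => F' (-↑φ) := (aux_summable_neg hF').subtype _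
  have e2 := aux_tsum_real (G := F') (by simp [hF'def]) hp hn
  rw [e1, e2]
  congr 1
  apply tsum_congr
  intro φ
  have h1 : (φ : ℝ) ≠ 0 := ne_of_gt φ.2
  have h2 : -(φ : ℝ) ≠ 0 := by simpa using h1
  simp [hF'def, h1, h2]

/-- supporting line at 1 for a convex function on (0,∞) -/
private lemma aux_support_line {g : ℝ → ℝ} (hg : ConvexOn ℝ (Set.Ioi (0:ℝ)) g) :
    ∃ c : ℝ, ∀ x ∈ Set.Ioi (0:ℝ), g 1 + c * (x - 1) ≤ g x := by
  set S : Set ℝ := (fun y => (g y - g 1) / (y - 1)) '' Set.Ioi 1 with hS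
  have hmem : ∀ {x y : ℝ}, 0 < x → x < 1 → 1 < y →
      (g 1 - g x) / (1 - x) ≤ (g y - g 1) / (y - 1) := by
    intro x y hx hxy h1y
    exact hg.slope_mono_adjacent (Set.mem_Ioi.mpr hx)
      (Set.mem_Ioi.mpr (lt_trans one_pos h1y)) hxy h1y
  have hne : S.Nonempty := ⟨_, ⟨2, by norm_num, rfl⟩⟩
  have hbdd : BddBelow S := by
    refine ⟨(g 1 - g (1/2)) / (1 - 1/2), ?_⟩
    rintro s ⟨y, hy, rfl⟩
    exact hmem (by norm_num) (by norm_num) hy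
  refine ⟨sInf S, fun x hx => ?_⟩
  have hx0 : (0:ℝ) < x := hx
  rcases lt_trichotomy x 1 with h | h | h
  · have hub : (g 1 - g x) / (1 - x) ≤ sInf S := by
      apply le_csInf hne
      rintro s ⟨y, hy, rfl⟩
      exact hmem hx0 h hy
    have h1x : 0 < 1 - x := by linarith
    rw [div_le_iff₀ h1x] at hub
    nlinarith [hub]
  · simp [h]
  · have hlb : sInf S ≤ (g x - g 1) / (x - 1) := csInf_le hbdd ⟨x, h, rfl⟩
    have h1x : 0 < x - 1 := by linarith
    rw [le_div_iff₀ h1x] at hlb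
    linarith

/-- the key pointwise inequality -/
private lemma aux_pointwise {f : ℝ → ℝ} {c : ℝ}
    (hc : ∀ x ∈ Set.Ioi (0:ℝ), (f 1 + Real.log 2) + c * (x - 1) ≤ f x + Real.log (1 + x))
    (hf1 : f 1 = 0)
    {a b m : ℝ} (ha : 0 ≤ a) (hb : 0 ≤ b) (hm : 0 < m)
    (hab : b = 0 → a = 0) (hba : a = 0 → b = 0) :
    Real.log 2 * b + c * (a - b) + Real.log m * b + b - m * (a + b) ≤ b * f (a / b) := by
  rcases eq_or_lt_of_le hb with hb0 | hb0
  · have ha0 : a = 0 := hab hb0.symm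
    simp [← hb0, ha0]
  · have ha0 : 0 < a := by
      rcases eq_or_lt_of_le ha with h | h
      · exact absurd (hba h.symm) (ne_of_gt hb0)
      · exact h
    have hx : (0:ℝ) < a / b := div_pos ha0 hb0
    have hg := hc (a / b) hx
    rw [hf1, zero_add] at hg
    -- b * f (a/b) ≥ b*log 2 + c*(a-b) - b*log(1+a/b)
    have h1 : Real.log 2 * b + c * (a - b) - b * Real.log (1 + a / b) ≤ b * f (a / b) := by
      have := mul_le_mul_of_nonneg_left hg hb
      have hcb : b * (c * (a / b - 1)) = c * (a - b) := by field_simp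
      nlinarith [this]
    -- remaining: log m * b + b - m*(a+b) ≤ - b*log(1+a/b)
    have hab' : 0 < a + b := by linarith
    have h2 : Real.log m * b + b - m * (a + b) ≤ -(b * Real.log (1 + a / b)) := by
      have hy : (0:ℝ) < b / (m * (a + b)) := div_pos hb0 (mul_pos hm hab')
      have hlog := aux_log_ge hy
      have hlogeq : Real.log (b / (m * (a + b))) =
          -Real.log (1 + a / b) - Real.log m := by
        rw [Real.log_div (ne_of_gt hb0) (ne_of_gt (mul_pos hm hab')),
            Real.log_mul (ne_of_gt hm) (ne_of_gt hab')]
        have : (1 : ℝ) + a / b = (a + b) / b := by field_simp; ring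
        rw [this, Real.log_div (ne_of_gt hab') (ne_of_gt hb0)]
        ring
      have hinv : 1 / (b / (m * (a + b))) = m * (a + b) / b := by
        rw [one_div_div]
      rw [hlogeq, hinv] at hlog
      -- hlog : 1 - m*(a+b)/b ≤ -log(1+a/b) - log m
      have := mul_le_mul_of_nonneg_left hlog (le_of_lt hb0)
      have hmb : b * (m * (a + b) / b) = m * (a + b) := by field_simp
      nlinarith [this]
    linarith

end Aux

/-- thermodynamic uncertainty relation for the generalised entropy
production `Σ_f = D_f[Pr(Γ) ∥ Pr(Γ†)]` and an anti-symmetric observable `Φ`. -/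
theorem entropyProduction_ge
    {Γ : Type*} [Countable Γ]
    (Pr : Γ → ℝ) (hPr : ∀ γ, 0 ≤ Pr γ) (hPrsummable : Summable Pr)
    (hPrsum : ∑' γ : Γ, Pr γ = 1)
    (dag : Γ → Γ) (hinv : ∀ γ, dag (dag γ) = γ)
    (hac : ∀ γ, Pr (dag γ) = 0 → Pr γ = 0)
    (Φ : Γ → ℝ) (hanti : ∀ γ, Φ (dag γ) = -Φ γ)
    (f : ℝ → ℝ) (hf : ConvexOn ℝ (Set.Ioi (0 : ℝ)) f) (hf1 : f 1 = 0)
    (hconv : ConvexOn ℝ (Set.Ioi (0 : ℝ)) (fun x => f x + Real.log (1 + x)))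
    (Sf : ℝ) (hSf : Sf = ∑' γ : Γ, Pr (dag γ) * f (Pr γ / Pr (dag γ)))
    (hSsummable : Summable (fun γ : Γ => Pr (dag γ) * f (Pr γ / Pr (dag γ))))
    (PΦ : ℝ → ℝ) (hPΦ : ∀ φ : ℝ, PΦ φ = ∑' γ : {g : Γ // Φ g = φ}, Pr ↑γ)
    (hH : Summable (fun φ : ℝ => PΦ φ * Real.log (PΦ φ)))
    (hHabs : Summable (fun φ : Set.Ioi (0 : ℝ) =>
      (PΦ ↑φ + PΦ (-(φ : ℝ))) * Real.log (PΦ ↑φ + PΦ (-(φ : ℝ))))) :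
    Sf ≥ (1 - PΦ 0) * Real.log 2 - symmetryEntropy PΦ := by
  classical
  obtain ⟨c, hc⟩ := aux_support_line hconv
  have hc' : ∀ x ∈ Set.Ioi (0:ℝ), (f 1 + Real.log 2) + c * (x - 1) ≤ f x + Real.log (1 + x) := by
    intro x hx
    have h := hc x hx
    rw [show (1:ℝ) + 1 = 2 by norm_num] at h
    exact h
  have hzero : ∀ γ, Pr γ = 0 → Pr (dag γ) = 0 := by
    intro γ h
    exact hac (dag γ) (by rwa [hinv])
  -- fiber HasSum for Pr
  have hPΦ' : ∀ t : ℝ, HasSum (fun γ : ↥(Φ ⁻¹' {t}) => Pr ↑γ) (PΦ t) := by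
    intro t
    have hs : Summable (fun γ : ↥(Φ ⁻¹' {t}) => Pr ↑γ) := hPrsummable.subtype _
    have : PΦ t = ∑' γ : ↥(Φ ⁻¹' {t}), Pr ↑γ := hPΦ t
    exact this ▸ hs.hasSum
  -- fiber HasSum for Pr ∘ dag
  have hQ' : ∀ t : ℝ, HasSum (fun γ : ↥(Φ ⁻¹' {t}) => Pr (dag ↑γ)) (PΦ (-t)) := by
    intro t
    let e : ↥(Φ ⁻¹' {t}) ≃ ↥(Φ ⁻¹' {-t}) :=
      { toFun := fun γ => ⟨dag ↑γ, by
          have hγ : Φ (↑γ : Γ) = t := γ.2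
          simp only [Set.mem_preimage, Set.mem_singleton_iff, hanti, hγ]⟩
        invFun := fun γ => ⟨dag ↑γ, by
          have hγ : Φ (↑γ : Γ) = -t := γ.2
          simp only [Set.mem_preimage, Set.mem_singleton_iff, hanti, hγ, neg_neg]⟩
        left_inv := fun γ => Subtype.ext (hinv ↑γ)
        right_inv := fun γ => Subtype.ext (hinv ↑γ) }
    simpa [Function.comp_def, e, Equiv.coe_fn_mk] using (Equiv.hasSum_iff e).mpr (hPΦ' (-t))
  have hPΦsum : HasSum PΦ 1 := by
    have h1 : HasSum Pr 1 := hPrsum ▸ hPrsummable.hasSum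
    have h2 := h1.tsum_fiberwise Φ
    have hfun : (fun t : ℝ => ∑' γ : ↥(Φ ⁻¹' {t}), Pr ↑γ) = PΦ :=
      funext fun t => (hPΦ' t).tsum_eq
    rwa [hfun] at h2
  have hA : HasSum (fun t : ℝ => ∑' γ : ↥(Φ ⁻¹' {t}), Pr (dag ↑γ) * f (Pr ↑γ / Pr (dag ↑γ))) Sf := by
    have h1 : HasSum (fun γ : Γ => Pr (dag γ) * f (Pr γ / Pr (dag γ))) Sf :=
      hSf ▸ hSsummable.hasSum
    exact h1.tsum_fiberwise Φ
  have hPΦ0 : ∀ t, 0 ≤ PΦ t := fun t => (hPΦ' t).nonneg fun γ => hPr _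
  have hst1 : ∀ t : ℝ, t ≠ 0 → PΦ t + PΦ (-t) ≤ 1 := by
    intro t ht
    have hne : t ≠ -t := fun h => ht (by linarith)
    have h := sum_le_hasSum ({t, -t} : Finset ℝ) (fun i _ => hPΦ0 i) hPΦsum
    rwa [Finset.sum_pair hne] at h
  have hstpos : ∀ t : ℝ, PΦ (-t) ≠ 0 → 0 < PΦ t + PΦ (-t) := by
    intro t h
    have h1 := lt_of_le_of_ne (hPΦ0 (-t)) (Ne.symm h)
    have h2 := hPΦ0 t
    linarith
  -- fiber inequality
  have hfiber : ∀ t : ℝ,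
      Real.log 2 * PΦ (-t) + c * (PΦ t - PΦ (-t))
        + PΦ (-t) * Real.log (PΦ (-t) / (PΦ t + PΦ (-t)))
      ≤ ∑' γ : ↥(Φ ⁻¹' {t}), Pr (dag ↑γ) * f (Pr ↑γ / Pr (dag ↑γ)) := by
    intro t
    by_cases hq : PΦ (-t) = 0
    · have hbz : ∀ γ : ↥(Φ ⁻¹' {t}), Pr (dag ↑γ) = 0 := by
        intro γ
        have h1 := hQ' t
        rw [hq] at h1
        exact le_antisymm (le_hasSum h1 γ fun j _ => hPr _) (hPr _)
      have hPz : PΦ t = 0 := by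
        have haz : (fun γ : ↥(Φ ⁻¹' {t}) => Pr ↑γ) = fun _ => 0 :=
          funext fun γ => hac _ (hbz γ)
        exact (hPΦ' t).unique (by rw [haz]; exact hasSum_zero)
      have hAz : ∑' γ : ↥(Φ ⁻¹' {t}), Pr (dag ↑γ) * f (Pr ↑γ / Pr (dag ↑γ)) = 0 := by
        have h2 : (fun γ : ↥(Φ ⁻¹' {t}) => Pr (dag ↑γ) * f (Pr ↑γ / Pr (dag ↑γ)))
            = fun _ => 0 := funext fun γ => by rw [hbz γ]; ring
        rw [h2]; exact tsum_zero
      rw [hAz, hq, hPz]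
      simp
    · have hq2 : 0 < PΦ (-t) := lt_of_le_of_ne (hPΦ0 _) (Ne.symm hq)
      have hst : 0 < PΦ t + PΦ (-t) := hstpos t hq
      set m : ℝ := PΦ (-t) / (PΦ t + PΦ (-t)) with hm
      have hm0 : 0 < m := div_pos hq2 hst
      have hpt : ∀ γ : ↥(Φ ⁻¹' {t}),
          Real.log 2 * Pr (dag ↑γ) + c * (Pr ↑γ - Pr (dag ↑γ))
            + Real.log m * Pr (dag ↑γ) + Pr (dag ↑γ) - m * (Pr ↑γ + Pr (dag ↑γ))
          ≤ Pr (dag ↑γ) * f (Pr ↑γ / Pr (dag ↑γ)) :=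
        fun γ => aux_pointwise hc' hf1 (hPr _) (hPr _) hm0 (fun h => hac _ h)
          (fun h => hzero _ h)
      have hbH := hQ' t
      have haH := hPΦ' t
      have hL : HasSum (fun γ : ↥(Φ ⁻¹' {t}) =>
          Real.log 2 * Pr (dag ↑γ) + c * (Pr ↑γ - Pr (dag ↑γ))
            + Real.log m * Pr (dag ↑γ) + Pr (dag ↑γ) - m * (Pr ↑γ + Pr (dag ↑γ)))
          (Real.log 2 * PΦ (-t) + c * (PΦ t - PΦ (-t))
            + Real.log m * PΦ (-t) + PΦ (-t) - m * (PΦ t + PΦ (-t))) :=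
        ((((hbH.mul_left (Real.log 2)).add ((haH.sub hbH).mul_left c)).add
          (hbH.mul_left (Real.log m))).add hbH).sub ((haH.add hbH).mul_left m)
      have hR : HasSum (fun γ : ↥(Φ ⁻¹' {t}) => Pr (dag ↑γ) * f (Pr ↑γ / Pr (dag ↑γ)))
          (∑' γ : ↥(Φ ⁻¹' {t}), Pr (dag ↑γ) * f (Pr ↑γ / Pr (dag ↑γ))) :=
        (hSsummable.subtype _).hasSum
      have hle := hasSum_le hpt hL hR
      have hcancel : m * (PΦ t + PΦ (-t)) = PΦ (-t) := by
        rw [hm]; exact div_mul_cancel₀ _ (ne_of_gt hst)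
      have hgoal_eq : Real.log 2 * PΦ (-t) + c * (PΦ t - PΦ (-t)) + PΦ (-t) * Real.log m
          = Real.log 2 * PΦ (-t) + c * (PΦ t - PΦ (-t))
            + Real.log m * PΦ (-t) + PΦ (-t) - m * (PΦ t + PΦ (-t)) := by
        rw [hcancel]; ring
      rw [hgoal_eq]
      exact hle
  set T1 := ∑' t : ℝ, PΦ t * Real.log (PΦ t) with hT1def
  have hT1 : HasSum (fun t : ℝ => PΦ t * Real.log (PΦ t)) T1 := hH.hasSum
  have hT1' : HasSum (fun t : ℝ => PΦ (-t) * Real.log (PΦ (-t))) T1 := aux_hasSum_neg hT1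
  have hQ1 : HasSum (fun t : ℝ => PΦ (-t)) 1 := aux_hasSum_neg hPΦsum
  have hsnn : ∀ t : ℝ, 0 ≤ PΦ t + PΦ (-t) := fun t => by
    have := hPΦ0 t; have := hPΦ0 (-t); linarith
  have hlognp : ∀ t : ℝ, t ≠ 0 → Real.log (PΦ t + PΦ (-t)) ≤ 0 :=
    fun t ht => Real.log_nonpos (hsnn t) (hst1 t ht)
  have hBsum : Summable (fun t : ℝ => if t = 0 then 0 else
      -((PΦ t + PΦ (-t)) * Real.log (PΦ t + PΦ (-t)))) := by
    apply aux_summable_real (by simp)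
    · apply hHabs.neg.congr
      intro φ
      rw [if_neg (ne_of_gt φ.2)]
    · apply hHabs.neg.congr
      intro φ
      have hφ : (0:ℝ) < ↑φ := φ.2
      rw [if_neg (by intro h; rw [neg_eq_zero] at h; exact (ne_of_gt hφ) h)]
      rw [neg_neg, add_comm (PΦ (-(φ:ℝ))) (PΦ ↑φ)]
  have hW'sum : Summable (fun t : ℝ => if t = 0 then 0
      else PΦ t * Real.log (PΦ t + PΦ (-t))) := by
    have hneg : Summable (fun t : ℝ => if t = 0 then 0
        else -(PΦ t * Real.log (PΦ t + PΦ (-t)))) := by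
      apply Summable.of_nonneg_of_le _ _ hBsum
      · intro t
        by_cases h : t = 0
        · simp [h]
        · rw [if_neg h]
          have h1 := hlognp t h
          have h2 := hPΦ0 t
          nlinarith
      · intro t
        by_cases h : t = 0
        · simp [h]
        · rw [if_neg h, if_neg h]
          have h1 := hlognp t h
          have h2 := hPΦ0 (-t)
          have h3 := hPΦ0 t
          nlinarith
    exact hneg.neg.congr (fun t => by by_cases h : t = 0 <;> simp [h])
  have hWsum : Summable (fun t : ℝ => PΦ t * Real.log (PΦ t + PΦ (-t))) := by
    have hδ : Summable (fun t : ℝ => if t = 0 then PΦ 0 * Real.log (PΦ 0 + PΦ (-0)) else 0) :=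
      (hasSum_ite_eq 0 _).summable
    apply (hW'sum.add hδ).congr
    intro t
    by_cases h : t = 0 <;> simp [h]
  set T2 := ∑' t : ℝ, PΦ t * Real.log (PΦ t + PΦ (-t)) with hT2def
  have hT2 : HasSum (fun t : ℝ => PΦ t * Real.log (PΦ t + PΦ (-t))) T2 := hWsum.hasSum
  have hT2' : HasSum (fun t : ℝ => PΦ (-t) * Real.log (PΦ t + PΦ (-t))) T2 := by
    have h := aux_hasSum_neg hT2
    have hfun : (fun t : ℝ => PΦ (-t) * Real.log (PΦ (-t) + PΦ (-(-t))))
        = fun t : ℝ => PΦ (-t) * Real.log (PΦ t + PΦ (-t)) := by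
      funext t; rw [neg_neg, add_comm (PΦ (-t)) (PΦ t)]
    rwa [hfun] at h
  have hFsum : HasSum (fun t : ℝ => Real.log 2 * PΦ (-t) + c * (PΦ t - PΦ (-t))
      + PΦ (-t) * Real.log (PΦ (-t) / (PΦ t + PΦ (-t))))
      (Real.log 2 * 1 + c * (1 - 1) + (T1 - T2)) := by
    have h := ((hQ1.mul_left (Real.log 2)).add ((hPΦsum.sub hQ1).mul_left c)).add
      (hT1'.sub hT2')
    have hfun : (fun t : ℝ => Real.log 2 * PΦ (-t) + c * (PΦ t - PΦ (-t))
        + (PΦ (-t) * Real.log (PΦ (-t)) - PΦ (-t) * Real.log (PΦ t + PΦ (-t))))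
        = fun t : ℝ => Real.log 2 * PΦ (-t) + c * (PΦ t - PΦ (-t))
        + PΦ (-t) * Real.log (PΦ (-t) / (PΦ t + PΦ (-t))) := by
      funext t
      by_cases hq : PΦ (-t) = 0
      · simp [hq]
      · rw [Real.log_div hq (ne_of_gt (hstpos t hq))]
        ring
    rwa [hfun] at h
  have hlow := hasSum_le hfiber hFsum hA
  set Sabs := ∑' φ : Set.Ioi (0:ℝ), (PΦ ↑φ + PΦ (-(φ:ℝ))) * Real.log (PΦ ↑φ + PΦ (-(φ:ℝ)))
    with hSabsdef
  have hT2val : T2 = PΦ 0 * Real.log (PΦ 0 + PΦ (-0)) + Sabs := by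
    rw [hT2def, aux_tsum_split hWsum]
    congr 1
    apply tsum_congr
    intro φ
    rw [neg_neg, add_comm (PΦ (-(φ:ℝ))) (PΦ ↑φ)]
    ring
  have hs0 : PΦ 0 + PΦ (-0) = 2 * PΦ 0 := by rw [neg_zero]; ring
  have hlog20 : PΦ 0 * Real.log (2 * PΦ 0) = PΦ 0 * Real.log 2 + PΦ 0 * Real.log (PΦ 0) := by
    by_cases h : PΦ 0 = 0
    · simp [h]
    · rw [Real.log_mul two_ne_zero h]; ring
  have hSE : symmetryEntropy PΦ = -T1 + Sabs + PΦ 0 * Real.log (PΦ 0) := by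
    unfold symmetryEntropy shannonEntropy absEntropy
    rw [← hT1def, ← hSabsdef]
    ring
  rw [ge_iff_le, hSE]
  rw [hT2val, hs0, hlog20] at hlow
  linarith
end

section
/- Let P be a probability mass function on ℝ whose support is symmetric (P(φ) > 0 if and only if P(−φ) > 0). Then D_KL[P(Φ) ∥ P(−Φ)] + Λ[P(Φ)] ≥ (1 − P(0)) · ln 2, where D_KL[P ∥ Q] = Σ_x P(x) ln(P(x)/Q(x)) is the Kullback–Leibler divergence and P(−Φ) denotes the pmf φ ↦ P(−φ). -/
open scoped BigOperators

/-- Kullback–Leibler divergence `D_KL[P ∥ Q] = Σ_x P(x) ln(P(x)/Q(x))`;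
terms with `P(x) = 0` are `0` automatically. -/
noncomputable def klDivergence (P Q : ℝ → ℝ) : ℝ :=
  ∑' x : ℝ, P x * Real.log (P x / Q x)

/-- The negation equivalence between `Ioi 0` and `Iio 0`. -/
noncomputable def negIoiEquiv : Set.Ioi (0 : ℝ) ≃ Set.Iio (0 : ℝ) where
  toFun x := ⟨-(x : ℝ), by simpa using neg_lt_zero.mpr (show (0:ℝ) < x from x.2)⟩
  invFun x := ⟨-(x : ℝ), by simpa using neg_pos.mpr (show (x:ℝ) < 0 from x.2)⟩
  left_inv x := by simp
  right_inv x := by simp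

lemma summable_neg_Ioi {g : ℝ → ℝ} (hg : Summable g) :
    Summable (fun x : Set.Ioi (0 : ℝ) => g (-(x : ℝ))) := by
  have h := (hg.subtype (Set.Iio (0 : ℝ)))
  have := (negIoiEquiv.summable_iff (f := fun x : Set.Iio (0 : ℝ) => g (x : ℝ))).2 h
  exact this

lemma tsum_neg_Ioi (g : ℝ → ℝ) :
    ∑' x : Set.Iio (0 : ℝ), g (x : ℝ) = ∑' x : Set.Ioi (0 : ℝ), g (-(x : ℝ)) :=
  (negIoiEquiv.tsum_eq (fun x : Set.Iio (0 : ℝ) => g (x : ℝ))).symm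

/-- Splitting a summable sum over `ℝ` into the value at `0` plus a sum over
positive reals of paired terms. -/
lemma tsum_split (g : ℝ → ℝ) (hg : Summable g) :
    ∑' x : ℝ, g x = g 0 + ∑' x : Set.Ioi (0 : ℝ), (g (x : ℝ) + g (-(x : ℝ))) := by
  have hs : Summable (g ∘ (↑) : ({(0 : ℝ)} : Set ℝ) → ℝ) := hg.subtype _
  have hsc : Summable (g ∘ (↑) : ↑({(0 : ℝ)} : Set ℝ)ᶜ → ℝ) := hg.subtype _
  have h1 : (∑' x : ({(0 : ℝ)} : Set ℝ), g x) + ∑' x : ↑({(0 : ℝ)} : Set ℝ)ᶜ, g x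
      = ∑' x : ℝ, g x := Summable.tsum_add_tsum_compl hs hsc
  have h2 : (∑' x : ({(0 : ℝ)} : Set ℝ), g x) = g 0 := tsum_singleton 0 g
  have hcompl : ({(0 : ℝ)} : Set ℝ)ᶜ = Set.Iio 0 ∪ Set.Ioi 0 := (Set.Iio_union_Ioi).symm
  have hdisj : Disjoint (Set.Iio (0 : ℝ)) (Set.Ioi 0) := by
    rw [Set.disjoint_iff_inter_eq_empty, Set.Iio_inter_Ioi]
    simp
  have h3 : (∑' x : ↑({(0 : ℝ)} : Set ℝ)ᶜ, g x)
      = (∑' x : Set.Iio (0 : ℝ), g (x : ℝ)) + ∑' x : Set.Ioi (0 : ℝ), g (x : ℝ) := by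
    rw [hcompl]
    exact Summable.tsum_union_disjoint hdisj (hg.subtype _) (hg.subtype _)
  have h4 : (∑' x : Set.Iio (0 : ℝ), g (x : ℝ)) = ∑' x : Set.Ioi (0 : ℝ), g (-(x : ℝ)) :=
    tsum_neg_Ioi g
  have h5 : ∑' x : Set.Ioi (0 : ℝ), (g (x : ℝ) + g (-(x : ℝ)))
      = (∑' x : Set.Ioi (0 : ℝ), g (x : ℝ)) + ∑' x : Set.Ioi (0 : ℝ), g (-(x : ℝ)) :=
    Summable.tsum_add (hg.subtype _) (summable_neg_Ioi hg)
  rw [← h1, h2, h3, h4, h5]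
  ring

/-- The key pointwise inequality. -/
lemma key_ineq (p q : ℝ) (hp : 0 ≤ p) (hq : 0 ≤ q) (hiff : 0 < p ↔ 0 < q) :
    (p + q) * Real.log 2 ≤
      -(p * Real.log q) - q * Real.log p + (p + q) * Real.log (p + q) := by
  rcases eq_or_lt_of_le hp with h | hp'
  · have hq0 : q = 0 := by
      by_contra h'
      have hq' : 0 < q := lt_of_le_of_ne hq (Ne.symm h')
      have := hiff.2 hq'
      linarith
    simp [← h, hq0]
  · have hq' : 0 < q := hiff.1 hp'
    have hs' : 0 < p + q := by positivity
    have h1 : Real.log (2 * q / (p + q)) ≤ 2 * q / (p + q) - 1 :=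
      Real.log_le_sub_one_of_pos (by positivity)
    have h2 : Real.log (2 * p / (p + q)) ≤ 2 * p / (p + q) - 1 :=
      Real.log_le_sub_one_of_pos (by positivity)
    have e1 : Real.log (2 * q / (p + q)) = Real.log 2 + Real.log q - Real.log (p + q) := by
      rw [Real.log_div (by positivity) (ne_of_gt hs'), Real.log_mul (by norm_num) (ne_of_gt hq')]
    have e2 : Real.log (2 * p / (p + q)) = Real.log 2 + Real.log p - Real.log (p + q) := by
      rw [Real.log_div (by positivity) (ne_of_gt hs'), Real.log_mul (by norm_num) (ne_of_gt hp')]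
    have hA : p * Real.log (2 * q / (p + q)) ≤ p * (2 * q / (p + q) - 1) :=
      mul_le_mul_of_nonneg_left h1 hp
    have hB : q * Real.log (2 * p / (p + q)) ≤ q * (2 * p / (p + q) - 1) :=
      mul_le_mul_of_nonneg_left h2 hq
    have hC : p * (2 * q / (p + q) - 1) + q * (2 * p / (p + q) - 1) = -(p - q) ^ 2 / (p + q) := by
      field_simp
      ring
    have hD : p * (2 * q / (p + q) - 1) + q * (2 * p / (p + q) - 1) ≤ 0 := by
      rw [hC, neg_div]
      have : 0 ≤ (p - q) ^ 2 / (p + q) := by positivity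
      linarith
    rw [e1] at hA
    rw [e2] at hB
    linarith [add_le_add hA hB, hD]

/-- for a pmf `P` on `ℝ` with symmetric support,
`D_KL[P(Φ) ∥ P(−Φ)] + Λ[P(Φ)] ≥ (1 − P(0)) · ln 2`. -/
theorem klDivergence_add_symmetryEntropy_ge
    (P : ℝ → ℝ) (hP : ∀ φ, 0 ≤ P φ) (hPsummable : Summable P)
    (hPsum : ∑' φ : ℝ, P φ = 1)
    (hsym : ∀ φ, 0 < P φ ↔ 0 < P (-φ))
    (hH : Summable (fun φ : ℝ => P φ * Real.log (P φ)))
    (hHabs : Summable (fun φ : Set.Ioi (0 : ℝ) =>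
      (P ↑φ + P (-(φ : ℝ))) * Real.log (P ↑φ + P (-(φ : ℝ)))))
    (hD : Summable (fun φ : ℝ => P φ * Real.log (P φ / P (-φ)))) :
    klDivergence P (fun φ => P (-φ)) + symmetryEntropy P ≥ (1 - P 0) * Real.log 2 := by
  classical
  -- the combined pointwise summand
  set f : ℝ → ℝ := fun x => -(P x * Real.log (P (-x))) with hf_def
  have hfeq : ∀ x, P x * Real.log (P x / P (-x)) - P x * Real.log (P x) = f x := by
    intro x
    by_cases h : P x = 0
    · simp [hf_def, h]
    · have hx : 0 < P x := lt_of_le_of_ne (hP x) (Ne.symm h)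
      have hnx : 0 < P (-x) := (hsym x).1 hx
      rw [Real.log_div (ne_of_gt hx) (ne_of_gt hnx), hf_def]
      ring
  have hfsummable : Summable f := by
    have := hD.sub hH
    simpa [funext hfeq] using this
  -- D + H = ∑ f
  have hDH : klDivergence P (fun φ => P (-φ)) + shannonEntropy P = ∑' x : ℝ, f x := by
    have h := Summable.tsum_sub hD hH
    rw [show (fun x => P x * Real.log (P x / P (-x)) - P x * Real.log (P x)) = f
      from funext hfeq] at h
    rw [klDivergence, shannonEntropy]
    linarith [h]
  -- split ∑ f
  have hsplit : ∑' x : ℝ, f x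
      = f 0 + ∑' x : Set.Ioi (0 : ℝ), (f (x : ℝ) + f (-(x : ℝ))) :=
    tsum_split f hfsummable
  have hf0 : f 0 = -(P 0 * Real.log (P 0)) := by simp [hf_def]
  -- summabilities over Ioi 0
  have hfpair : Summable (fun x : Set.Ioi (0 : ℝ) => f (x : ℝ) + f (-(x : ℝ))) :=
    (hfsummable.subtype _).add (summable_neg_Ioi hfsummable)
  -- combine with the abs-entropy sum
  have hcomb : klDivergence P (fun φ => P (-φ)) + symmetryEntropy P
      = ∑' x : Set.Ioi (0 : ℝ),
          (f (x : ℝ) + f (-(x : ℝ))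
            + (P (x : ℝ) + P (-(x : ℝ))) * Real.log (P (x : ℝ) + P (-(x : ℝ)))) := by
    rw [Summable.tsum_add hfpair hHabs]
    rw [symmetryEntropy, absEntropy]
    have : klDivergence P (fun φ => P (-φ)) + shannonEntropy P = ∑' x : ℝ, f x := hDH
    rw [shannonEntropy] at this ⊢
    rw [hsplit, hf0] at this
    linarith
  -- the sum of pair masses over Ioi 0 equals 1 - P 0
  have hmass : ∑' x : Set.Ioi (0 : ℝ), (P (x : ℝ) + P (-(x : ℝ))) = 1 - P 0 := by
    have := tsum_split P hPsummable
    rw [hPsum] at this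
    linarith
  have hmass_summable : Summable (fun x : Set.Ioi (0 : ℝ) => P (x : ℝ) + P (-(x : ℝ))) :=
    (hPsummable.subtype _).add (summable_neg_Ioi hPsummable)
  -- pointwise inequality
  have hpt : ∀ x : Set.Ioi (0 : ℝ),
      (P (x : ℝ) + P (-(x : ℝ))) * Real.log 2
        ≤ f (x : ℝ) + f (-(x : ℝ))
            + (P (x : ℝ) + P (-(x : ℝ))) * Real.log (P (x : ℝ) + P (-(x : ℝ))) := by
    intro x
    have h := key_ineq (P (x : ℝ)) (P (-(x : ℝ))) (hP _) (hP _) (hsym (x : ℝ))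
    have : f (x : ℝ) + f (-(x : ℝ))
        = -(P (x : ℝ) * Real.log (P (-(x : ℝ)))) - P (-(x : ℝ)) * Real.log (P (x : ℝ)) := by
      simp only [hf_def, neg_neg]
      ring
    rw [this]
    linarith
  -- conclude
  rw [hcomb, ← hmass, ← tsum_mul_right]
  exact Summable.tsum_le_tsum hpt (hmass_summable.mul_right _)
    ((hfpair.add hHabs))
end

section
/- Let P be a probability mass function on ℝ whose support is symmetric (P(φ) > 0 if and only if P(−φ) > 0). With f₁(x) = (x − 1)², the χ²-divergence satisfies D_{f₁}[P(Φ) ∥ P(−Φ)] + Λ[P(Φ)] ≥ (1 − P(0)) · ln 2, where P(−Φ) denotes the pmf φ ↦ P(−φ). -/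
open scoped BigOperators

lemma tsum_real_split {f : ℝ → ℝ} (hf : Summable f) :
    ∑' x : ℝ, f x = f 0 + ∑' x : Set.Ioi (0:ℝ), (f ↑x + f (-(x:ℝ))) := by
  have hpos : Summable fun x : Set.Ioi (0:ℝ) => f ↑x := hf.subtype _
  have hnegR : Summable fun x : ℝ => f (-x) := hf.comp_injective neg_injective
  have hneg : Summable fun x : Set.Ioi (0:ℝ) => f (-(x:ℝ)) := hnegR.subtype _
  have himg : (Set.Iio (0:ℝ)) = Neg.neg '' Set.Ioi (0:ℝ) := by
    ext x
    simp only [Set.mem_Iio, Set.mem_image, Set.mem_Ioi]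
    constructor
    · intro h; exact ⟨-x, by linarith, by ring⟩
    · rintro ⟨y, hy, rfl⟩; linarith
  have hIio : ∑' y : Set.Iio (0:ℝ), f ↑y = ∑' x : Set.Ioi (0:ℝ), f (-(x:ℝ)) := by
    rw [himg]
    exact tsum_image f neg_injective.injOn
  have h1 : (∑' x : Set.Ioi (0:ℝ), f ↑x) + ∑' x : ↑(Set.Ioi (0:ℝ))ᶜ, f ↑x
      = ∑' x : ℝ, f x := Summable.tsum_subtype_add_tsum_subtype_compl hf _
  have h2 : ∑' x : ↑(Set.Ioi (0:ℝ))ᶜ, f ↑x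
      = (∑' y : Set.Iio (0:ℝ), f ↑y) + f 0 := by
    have hc : (Set.Ioi (0:ℝ))ᶜ = Set.Iio 0 ∪ {0} := by
      rw [Set.compl_Ioi, Set.Iio_union_right]
    rw [hc, Summable.tsum_union_disjoint (by simp) (hf.subtype _) (hf.subtype _),
      tsum_singleton]
  rw [← h1, h2, hIio, Summable.tsum_add hpos hneg]
  ring

lemma pair_ineq (p q : ℝ) (hp : 0 ≤ p) (hq : 0 ≤ q) (hiff : 0 < p ↔ 0 < q) :
    (p + q) * Real.log 2 ≤
      (q * (p / q - 1) ^ 2 + p * (q / p - 1) ^ 2)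
        - (p * Real.log p + q * Real.log q)
        + (p + q) * Real.log (p + q) := by
  rcases hp.eq_or_lt with h0 | hp'
  · have hq0 : q = 0 := by
      by_contra h
      exact absurd (hiff.mpr (lt_of_le_of_ne hq (Ne.symm h))) (by rw [← h0]; exact lt_irrefl 0)
    simp [← h0, hq0]
  · have hq' : 0 < q := hiff.mp hp'
    have hs : 0 < p + q := by linarith
    have hl1 : Real.log (2 * p / (p + q)) ≤ 2 * p / (p + q) - 1 :=
      Real.log_le_sub_one_of_pos (by positivity)
    have hl2 : Real.log (2 * q / (p + q)) ≤ 2 * q / (p + q) - 1 :=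
      Real.log_le_sub_one_of_pos (by positivity)
    have e1 : Real.log (2 * p / (p + q)) = Real.log 2 + Real.log p - Real.log (p + q) := by
      rw [Real.log_div (by positivity) hs.ne', Real.log_mul two_ne_zero hp'.ne']
    have e2 : Real.log (2 * q / (p + q)) = Real.log 2 + Real.log q - Real.log (p + q) := by
      rw [Real.log_div (by positivity) hs.ne', Real.log_mul two_ne_zero hq'.ne']
    have m1 : p * Real.log (2 * p / (p + q)) ≤ p * (2 * p / (p + q) - 1) :=
      mul_le_mul_of_nonneg_left hl1 hp
    have m2 : q * Real.log (2 * q / (p + q)) ≤ q * (2 * q / (p + q) - 1) :=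
      mul_le_mul_of_nonneg_left hl2 hq
    rw [e1] at m1; rw [e2] at m2
    have key : p * (2 * p / (p + q) - 1) + q * (2 * q / (p + q) - 1) = (p - q) ^ 2 / (p + q) := by
      field_simp
      ring
    have d1 : q * (p / q - 1) ^ 2 = (p - q) ^ 2 / q := by
      field_simp
    have d2 : p * (q / p - 1) ^ 2 = (p - q) ^ 2 / p := by
      field_simp
      ring
    have hdd : (p - q) ^ 2 / (p + q) ≤ (p - q) ^ 2 / q := by
      apply div_le_div_of_nonneg_left (sq_nonneg _) hq'
      linarith
    have hdp : 0 ≤ (p - q) ^ 2 / p := by positivity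
    nlinarith [m1, m2]

/-- uncertainty relation for the χ²-divergence, i.e. the
`f`-divergence with `f₁(x) = (x − 1)²`. -/
theorem chiSq_fDivergence_add_symmetryEntropy_ge
    (P : ℝ → ℝ) (hP : ∀ φ, 0 ≤ P φ) (hPsummable : Summable P)
    (hPsum : ∑' φ : ℝ, P φ = 1)
    (hsym : ∀ φ, 0 < P φ ↔ 0 < P (-φ))
    (hH : Summable (fun φ : ℝ => P φ * Real.log (P φ)))
    (hHabs : Summable (fun φ : Set.Ioi (0 : ℝ) =>
      (P ↑φ + P (-(φ : ℝ))) * Real.log (P ↑φ + P (-(φ : ℝ)))))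
    (hD : Summable (fun φ : ℝ => P (-φ) * (P φ / P (-φ) - 1) ^ 2)) :
    fDivergence (fun x => (x - 1) ^ 2) P (fun φ => P (-φ)) + symmetryEntropy P
      ≥ (1 - P 0) * Real.log 2 := by
  have hD1 : Summable (fun x : Set.Ioi (0:ℝ) =>
      P (-(x:ℝ)) * (P ↑x / P (-(x:ℝ)) - 1) ^ 2) := hD.subtype _
  have hD2 : Summable (fun x : Set.Ioi (0:ℝ) =>
      P (-(-(x:ℝ))) * (P (-(x:ℝ)) / P (-(-(x:ℝ))) - 1) ^ 2) :=
    (hD.comp_injective neg_injective).subtype _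
  have hH1 : Summable (fun x : Set.Ioi (0:ℝ) => P ↑x * Real.log (P ↑x)) := hH.subtype _
  have hH2 : Summable (fun x : Set.Ioi (0:ℝ) => P (-(x:ℝ)) * Real.log (P (-(x:ℝ)))) :=
    (hH.comp_injective neg_injective).subtype _
  have hS1 : Summable (fun x : Set.Ioi (0:ℝ) => P ↑x) := hPsummable.subtype _
  have hS2 : Summable (fun x : Set.Ioi (0:ℝ) => P (-(x:ℝ))) :=
    (hPsummable.comp_injective neg_injective).subtype _
  have eD := tsum_real_split hD
  have eH := tsum_real_split hH
  have eP := tsum_real_split hPsummable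
  rw [hPsum] at eP
  have hg0 : P (-(0:ℝ)) * (P 0 / P (-(0:ℝ)) - 1) ^ 2 = 0 := by
    rw [neg_zero]
    rcases (hP 0).eq_or_lt with h | h
    · rw [← h]; ring
    · rw [div_self h.ne']; ring
  have key : ∑' x : Set.Ioi (0:ℝ), ((P ↑x + P (-(x:ℝ))) * Real.log 2)
      ≤ ∑' x : Set.Ioi (0:ℝ),
          ((P (-(x:ℝ)) * (P ↑x / P (-(x:ℝ)) - 1) ^ 2
              + P (-(-(x:ℝ))) * (P (-(x:ℝ)) / P (-(-(x:ℝ))) - 1) ^ 2)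
            - (P ↑x * Real.log (P ↑x) + P (-(x:ℝ)) * Real.log (P (-(x:ℝ))))
            + (P ↑x + P (-(x:ℝ))) * Real.log (P ↑x + P (-(x:ℝ)))) := by
    apply Summable.tsum_le_tsum _ ((hS1.add hS2).mul_right _)
      (((hD1.add hD2).sub (hH1.add hH2)).add hHabs)
    intro x
    have h := pair_ineq (P ↑x) (P (-(x:ℝ))) (hP _) (hP _) (hsym _)
    simp only [neg_neg]
    linarith [h]
  rw [tsum_mul_right, Summable.tsum_add ((hD1.add hD2).sub (hH1.add hH2)) hHabs,
    Summable.tsum_sub (hD1.add hD2) (hH1.add hH2)] at key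
  have e1 : fDivergence (fun x => (x - 1) ^ 2) P (fun φ => P (-φ))
      = ∑' x : ℝ, P (-x) * (P x / P (-x) - 1) ^ 2 := rfl
  rw [ge_iff_le, e1, eD]
  unfold symmetryEntropy shannonEntropy absEntropy
  rw [eH]
  have h1 : (1:ℝ) - P 0 = ∑' x : Set.Ioi (0:ℝ), (P ↑x + P (-(x:ℝ))) := by linarith [eP]
  rw [h1]
  have hsplit : (∑' x : Set.Ioi (0:ℝ),
      (P (-(x:ℝ)) * (P ↑x / P (-(x:ℝ)) - 1) ^ 2
        + P (-(-(x:ℝ))) * (P (-(x:ℝ)) / P (-(-(x:ℝ))) - 1) ^ 2))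
      = ∑' x : Set.Ioi (0:ℝ), P (-(x:ℝ)) * (P ↑x / P (-(x:ℝ)) - 1) ^ 2
        + ∑' x : Set.Ioi (0:ℝ), P (-(-(x:ℝ))) * (P (-(x:ℝ)) / P (-(-(x:ℝ))) - 1) ^ 2 :=
    Summable.tsum_add hD1 hD2
  have hsplit2 : (∑' x : Set.Ioi (0:ℝ),
      (P ↑x * Real.log (P ↑x) + P (-(x:ℝ)) * Real.log (P (-(x:ℝ)))))
      = ∑' x : Set.Ioi (0:ℝ), P ↑x * Real.log (P ↑x)
        + ∑' x : Set.Ioi (0:ℝ), P (-(x:ℝ)) * Real.log (P (-(x:ℝ))) :=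
    Summable.tsum_add hH1 hH2
  linarith [key, hg0, hsplit, hsplit2]
end

section
/- Let P be a probability mass function on ℝ whose support is symmetric (P(φ) > 0 if and only if P(−φ) > 0). With f₂(x) = x ln(2x/(x+1)) + ln(2/(x+1)), the Jensen–Shannon divergence satisfies D_{f₂}[P(Φ) ∥ P(−Φ)] + Λ[P(Φ)] ≥ (1 − P(0)) · ln 2, where P(−Φ) denotes the pmf φ ↦ P(−φ). -/
open scoped BigOperators

/-- The function `f₂` generating the Jensen–Shannon divergence. -/
noncomputable def jsFun (x : ℝ) : ℝ :=
  x * Real.log (2 * x / (x + 1)) + Real.log (2 / (x + 1))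

/- ### Auxiliary lemmas -/

lemma aux_convex (p q : ℝ) (hp : 0 ≤ p) (hq : 0 ≤ q) :
    (p + q) * Real.log (p + q) ≤ p * Real.log p + q * Real.log q + (p + q) * Real.log 2 := by
  rcases eq_or_lt_of_le (by linarith : (0:ℝ) ≤ p + q) with h | h
  · have hp0 : p = 0 := by linarith
    have hq0 : q = 0 := by linarith
    simp [hp0, hq0]
  · have hc := Real.convexOn_mul_log.2 (Set.mem_Ici.2 hp) (Set.mem_Ici.2 hq)
      (by norm_num : (0:ℝ) ≤ 1/2) (by norm_num : (0:ℝ) ≤ 1/2) (by norm_num)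
    simp only [smul_eq_mul] at hc
    have harg : (1/2 : ℝ) * p + (1/2 : ℝ) * q = (p + q) / 2 := by ring
    rw [harg] at hc
    have hlog : Real.log ((p + q) / 2) = Real.log (p + q) - Real.log 2 :=
      Real.log_div h.ne' two_ne_zero
    rw [hlog] at hc
    nlinarith [hc]

lemma tsum_sym (h : ℝ → ℝ) (hsymm : ∀ φ : ℝ, h (-φ) = h φ)
    (hs : Summable (fun φ : Set.Ioi (0:ℝ) => h ↑φ)) :
    Summable h ∧ ∑' φ : ℝ, h φ = h 0 + 2 * ∑' φ : Set.Ioi (0:ℝ), h ↑φ := by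
  set iO : ℝ → ℝ := (Set.Ioi (0:ℝ)).indicator h with hiO
  set iI : ℝ → ℝ := (Set.Iio (0:ℝ)).indicator h with hiI
  set iZ : ℝ → ℝ := ({0} : Set ℝ).indicator h with hiZ
  have hind : Summable iO := summable_subtype_iff_indicator.1 hs
  have hneg : ∀ x : ℝ, iO (-x) = iI x := by
    intro x
    by_cases hx : x < 0 <;>
      simp [hiO, hiI, Set.indicator_apply, Set.mem_Ioi, Set.mem_Iio, hx, hsymm]
  have hindI : Summable iI := by
    have := (Equiv.neg ℝ).summable_iff.2 hind
    refine this.congr fun x => ?_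
    simpa using hneg x
  have hindZ : Summable iZ := by
    apply summable_of_ne_finset_zero (s := {0})
    intro x hx
    exact Set.indicator_of_notMem (by simpa using hx) h
  have hdec : h = fun x => iZ x + iO x + iI x := by
    funext x
    rcases lt_trichotomy x 0 with hx | hx | hx
    · simp [hiO, hiI, hiZ, Set.indicator, hx, hx.ne, not_lt.2 hx.le]
    · simp [hiO, hiI, hiZ, Set.indicator, hx]
    · simp [hiO, hiI, hiZ, Set.indicator, hx, hx.ne', not_lt.2 hx.le]
  have hsum : Summable h := by
    rw [hdec]; exact (hindZ.add hind).add hindI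
  refine ⟨hsum, ?_⟩
  have hZ : ∑' x : ℝ, iZ x = h 0 := by
    rw [tsum_eq_single 0]
    · simp [hiZ]
    · intro b hb; exact Set.indicator_of_notMem (by simpa using hb) h
  have hIoi : ∑' x : ℝ, iO x = ∑' φ : Set.Ioi (0:ℝ), h ↑φ := (tsum_subtype _ _).symm
  have hIio : ∑' x : ℝ, iI x = ∑' x : ℝ, iO x := by
    rw [← (Equiv.neg ℝ).tsum_eq iO]
    exact tsum_congr fun x => by simpa using (hneg x).symm
  calc ∑' φ : ℝ, h φ = ∑' x : ℝ, (iZ x + iO x + iI x) := by rw [hdec]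
    _ = (∑' x : ℝ, iZ x + ∑' x : ℝ, iO x) + ∑' x : ℝ, iI x := by
        rw [Summable.tsum_add (hindZ.add hind) hindI, Summable.tsum_add hindZ hind]
    _ = h 0 + 2 * ∑' φ : Set.Ioi (0:ℝ), h ↑φ := by rw [hZ, hIoi, hIio, hIoi]; ring

lemma js_term (p q : ℝ) (hp : 0 < p) (hq : 0 < q) :
    q * jsFun (p / q) =
      p * Real.log p + q * Real.log q - (p + q) * Real.log (p + q)
        + (p + q) * Real.log 2 := by
  have hpq : (0:ℝ) < p + q := by linarith
  have h1 : 2 * (p / q) / (p / q + 1) = 2 * p / (p + q) := by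
    field_simp
  have h2 : (2 : ℝ) / (p / q + 1) = 2 * q / (p + q) := by
    field_simp
  unfold jsFun
  rw [h1, h2, Real.log_div (by positivity) hpq.ne', Real.log_div (by positivity) hpq.ne',
    Real.log_mul two_ne_zero hp.ne', Real.log_mul two_ne_zero hq.ne']
  field_simp
  ring

/-- uncertainty relation for the Jensen–Shannon divergence, i.e. the
`f`-divergence with `f₂(x) = x ln(2x/(x+1)) + ln(2/(x+1))`. -/
theorem js_fDivergence_add_symmetryEntropy_ge
    (P : ℝ → ℝ) (hP : ∀ φ, 0 ≤ P φ) (hPsummable : Summable P)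
    (hPsum : ∑' φ : ℝ, P φ = 1)
    (hsym : ∀ φ, 0 < P φ ↔ 0 < P (-φ))
    (hH : Summable (fun φ : ℝ => P φ * Real.log (P φ)))
    (hHabs : Summable (fun φ : Set.Ioi (0 : ℝ) =>
      (P ↑φ + P (-(φ : ℝ))) * Real.log (P ↑φ + P (-(φ : ℝ)))))
    (hD : Summable (fun φ : ℝ => P (-φ) * jsFun (P φ / P (-φ)))) :
    fDivergence jsFun P (fun φ => P (-φ)) + symmetryEntropy P
      ≥ (1 - P 0) * Real.log 2 := by
  classical
  set L : ℝ → ℝ := fun φ => P φ * Real.log (P φ) with hLdef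
  set Q : ℝ → ℝ := fun φ => P φ + P (-φ) with hQdef
  set A : ℝ → ℝ := fun φ => Q φ * Real.log (Q φ) with hAdef
  set Ls : ℝ → ℝ := fun φ => L φ + L (-φ) with hLsdef
  have hQsymm : ∀ φ, Q (-φ) = Q φ := fun φ => by simp [hQdef, add_comm]
  have hAsymm : ∀ φ, A (-φ) = A φ := fun φ => by simp [hAdef, hQsymm]
  have hLssymm : ∀ φ, Ls (-φ) = Ls φ := fun φ => by simp [hLsdef, add_comm]
  -- summability facts
  have hLn : Summable (fun φ => L (-φ)) := by
    have := (Equiv.neg ℝ).summable_iff.2 hH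
    exact this.congr fun x => by simp [hLdef]
  have hPn : Summable (fun φ => P (-φ)) := by
    have := (Equiv.neg ℝ).summable_iff.2 hPsummable
    exact this.congr fun x => by simp
  have hQsum : Summable Q := hPsummable.add hPn
  have hLssum : Summable Ls := hH.add hLn
  -- tsums under negation
  have hTn : ∑' φ : ℝ, L (-φ) = ∑' φ : ℝ, L φ := by
    rw [← (Equiv.neg ℝ).tsum_eq L]
    exact tsum_congr fun x => by simp
  have hPnsum : ∑' φ : ℝ, P (-φ) = 1 := by
    rw [← hPsum, ← (Equiv.neg ℝ).tsum_eq P]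
    exact tsum_congr fun x => by simp
  -- split sums over 0, Ioi, Iio
  have hAbsSub : Summable (fun φ : Set.Ioi (0:ℝ) => A ↑φ) := hHabs
  obtain ⟨hAsum, hAsplit⟩ := tsum_sym A hAsymm hAbsSub
  obtain ⟨_, hQsplit⟩ := tsum_sym Q hQsymm (hQsum.subtype _)
  obtain ⟨_, hLssplit⟩ := tsum_sym Ls hLssymm (hLssum.subtype _)
  set T := ∑' φ : ℝ, L φ with hTdef
  set V := ∑' φ : Set.Ioi (0:ℝ), A ↑φ with hVdef
  set W := ∑' φ : Set.Ioi (0:ℝ), Ls ↑φ with hWdef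
  set SQ := ∑' φ : Set.Ioi (0:ℝ), Q ↑φ with hSQdef
  -- values of split sums
  have hQtot : ∑' φ : ℝ, Q φ = 2 := by
    rw [hQdef, Summable.tsum_add hPsummable hPn, hPsum, hPnsum]; norm_num
  have hQ0 : Q 0 = 2 * P 0 := by simp [hQdef]; ring
  have hSQ : SQ = 1 - P 0 := by
    rw [hQtot, hQ0] at hQsplit; linarith
  have hLstot : ∑' φ : ℝ, Ls φ = 2 * T := by
    rw [hLsdef, Summable.tsum_add hH hLn, hTn]; rw [hTdef]; ring
  have hLs0 : Ls 0 = 2 * (P 0 * Real.log (P 0)) := by simp [hLsdef, hLdef]; ring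
  have hW : W = T - P 0 * Real.log (P 0) := by
    rw [hLstot, hLs0] at hLssplit; linarith
  -- main pointwise inequality summed over Ioi
  have hVW : V ≤ W + SQ * Real.log 2 := by
    have hle : ∀ x : Set.Ioi (0:ℝ), A ↑x ≤ Ls ↑x + Q ↑x * Real.log 2 := by
      intro x
      have := aux_convex (P ↑x) (P (-(x:ℝ))) (hP _) (hP _)
      simp only [hAdef, hQdef, hLsdef, hLdef]
      linarith
    have hs1 : Summable (fun x : Set.Ioi (0:ℝ) => Ls ↑x) := hLssum.subtype _
    have hs2 : Summable (fun x : Set.Ioi (0:ℝ) => Q ↑x * Real.log 2) :=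
      (hQsum.subtype _).mul_right _
    have := Summable.tsum_le_tsum hle hAbsSub (hs1.add hs2)
    rw [Summable.tsum_add hs1 hs2, tsum_mul_right] at this
    exact this
  -- value of the divergence
  have hterm : ∀ φ : ℝ, P (-φ) * jsFun (P φ / P (-φ)) = Ls φ + Q φ * Real.log 2 - A φ := by
    intro φ
    rcases eq_or_lt_of_le (hP (-φ)) with hq | hq
    · have hp0 : P φ = 0 := by
        by_contra hne
        have hppos : 0 < P φ := lt_of_le_of_ne (hP φ) (Ne.symm hne)
        have := (hsym φ).1 hppos
        rw [← hq] at this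
        exact lt_irrefl _ this
      simp [hLsdef, hQdef, hAdef, hLdef, hp0, ← hq]
    · have hppos : 0 < P φ := (hsym φ).2 hq
      rw [js_term (P φ) (P (-φ)) hppos hq]
      simp only [hLsdef, hQdef, hAdef, hLdef]
      ring
  have hDval : fDivergence jsFun P (fun φ => P (-φ))
      = 2 * T + 2 * Real.log 2 - (A 0 + 2 * V) := by
    show (∑' φ : ℝ, P (-φ) * jsFun (P φ / P (-φ))) = _
    rw [tsum_congr hterm,
      Summable.tsum_sub (hLssum.add (hQsum.mul_right _)) hAsum,
      Summable.tsum_add hLssum (hQsum.mul_right _), tsum_mul_right,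
      hLstot, hQtot, hAsplit]
  have hA0 : A 0 = 2 * P 0 * Real.log 2 + 2 * (P 0 * Real.log (P 0)) := by
    rcases eq_or_lt_of_le (hP 0) with h0 | h0
    · simp [hAdef, hQ0, ← h0]
    · rw [hAdef]
      simp only
      rw [hQ0, Real.log_mul two_ne_zero h0.ne']
      ring
  -- entropies
  have hHval : shannonEntropy P = -T := by
    rw [shannonEntropy, ← hLdef, ← hTdef]
  have hHabsval : absEntropy P = -V - P 0 * Real.log (P 0) := by
    have : (∑' φ : Set.Ioi (0 : ℝ), (P ↑φ + P (-(φ : ℝ))) * Real.log (P ↑φ + P (-(φ : ℝ)))) = V := by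
      rw [hVdef]
    rw [absEntropy, this]
  rw [hDval, symmetryEntropy, hHval, hHabsval, hA0]
  have hlog2 : (0:ℝ) ≤ Real.log 2 := Real.log_nonneg (by norm_num)
  rw [hSQ] at hVW
  nlinarith [hVW]
end

section
/- Let f : (0,∞) → ℝ be convex with f(1) = 0 such that x ↦ f(x) + ln(1+x) is convex on (0,∞). Let P : ℝ → ℝ be a probability density function with P(φ) > 0 for all φ ∈ ℝ and ∫_ℝ P(φ) dφ = 1, and assume the integrals below exist (the integrands are integrable). Then ∫_ℝ P(φ) [ f(P(−φ)/P(φ)) + ln(1 + P(−φ)/P(φ)) ] dφ ≥ ln 2. -/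
open MeasureTheory

/-- integral Jensen inequality. For `f` convex on `(0,∞)` with
`f(1) = 0` such that `x ↦ f(x) + ln(1+x)` is convex on `(0,∞)`, and a strictly
positive probability density `P` on `ℝ` such that the integrand below is
integrable,
`∫_ℝ P(φ) [f(P(−φ)/P(φ)) + ln(1 + P(−φ)/P(φ))] dφ ≥ ln 2`. -/
theorem integral_jensen_density
    (f : ℝ → ℝ) (hf : ConvexOn ℝ (Set.Ioi (0 : ℝ)) f) (hf1 : f 1 = 0)
    (hconv : ConvexOn ℝ (Set.Ioi (0 : ℝ)) (fun x => f x + Real.log (1 + x)))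
    (P : ℝ → ℝ) (hPmeas : Measurable P) (hPpos : ∀ φ, 0 < P φ)
    (hPint : Integrable P) (hPone : ∫ φ : ℝ, P φ = 1)
    (hint : Integrable (fun φ : ℝ =>
      P φ * (f (P (-φ) / P φ) + Real.log (1 + P (-φ) / P φ)))) :
    (∫ φ : ℝ, P φ * (f (P (-φ) / P φ) + Real.log (1 + P (-φ) / P φ)))
      ≥ Real.log 2 := by
  set F : ℝ → ℝ := fun x => f x + Real.log (1 + x) with hF
  have hF1 : F 1 = Real.log 2 := by
    simp [hF, hf1]; norm_num
  -- existence of a supporting line at 1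
  obtain ⟨c, hc⟩ : ∃ c : ℝ, ∀ x ∈ Set.Ioi (0 : ℝ), F 1 + c * (x - 1) ≤ F x := by
    set S : Set ℝ := (fun y => (F y - F 1) / (y - 1)) '' Set.Ioi 1 with hS
    have hne : S.Nonempty := ⟨_, ⟨2, by norm_num, rfl⟩⟩
    have hbdd : BddBelow S := by
      refine ⟨(F 1 - F (1/2)) / (1 - 1/2), ?_⟩
      rintro s ⟨y, hy, rfl⟩
      exact hconv.slope_mono_adjacent (by norm_num) (Set.mem_Ioi.mpr (lt_trans one_pos (Set.mem_Ioi.mp hy)))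
        (by norm_num) hy
    refine ⟨sInf S, fun x hx => ?_⟩
    rcases lt_trichotomy x 1 with h | h | h
    · have hle : (F 1 - F x) / (1 - x) ≤ sInf S := by
        apply le_csInf hne
        rintro s ⟨y, hy, rfl⟩
        exact hconv.slope_mono_adjacent hx (Set.mem_Ioi.mpr (lt_trans one_pos (Set.mem_Ioi.mp hy))) h hy
      have h1x : (0:ℝ) < 1 - x := by linarith
      rw [div_le_iff₀ h1x] at hle
      nlinarith
    · simp [h]
    · have hle : sInf S ≤ (F x - F 1) / (x - 1) :=
        csInf_le hbdd ⟨x, h, rfl⟩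
      have h1x : (0:ℝ) < x - 1 := by linarith
      rw [le_div_iff₀ h1x] at hle
      linarith
  -- the lower-bound function
  have hPnegint : Integrable (fun φ : ℝ => P (-φ)) := hPint.comp_neg
  have hPnegone : ∫ φ : ℝ, P (-φ) = 1 := by
    rw [MeasureTheory.integral_neg_eq_self P]; exact hPone
  have hmono : ∀ φ : ℝ,
      Real.log 2 * P φ + c * (P (-φ) - P φ)
        ≤ P φ * (f (P (-φ) / P φ) + Real.log (1 + P (-φ) / P φ)) := by
    intro φ
    have hr : P (-φ) / P φ ∈ Set.Ioi (0 : ℝ) :=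
      div_pos (hPpos (-φ)) (hPpos φ)
    have := hc _ hr
    have hPφ : P φ ≠ 0 := (hPpos φ).ne'
    have h2 : P φ * (F 1 + c * (P (-φ) / P φ - 1))
        ≤ P φ * F (P (-φ) / P φ) :=
      mul_le_mul_of_nonneg_left this (hPpos φ).le
    have h3 : P φ * (P (-φ) / P φ - 1) = P (-φ) - P φ := by
      field_simp
    calc Real.log 2 * P φ + c * (P (-φ) - P φ)
        = P φ * (F 1 + c * (P (-φ) / P φ - 1)) := by
          rw [hF1]; rw [mul_add, mul_comm (P φ) (Real.log 2),
            ← mul_assoc, mul_comm (P φ) c, mul_assoc, h3]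
      _ ≤ P φ * F (P (-φ) / P φ) := h2
      _ = P φ * (f (P (-φ) / P φ) + Real.log (1 + P (-φ) / P φ)) := rfl
  have hsub : Integrable (fun φ : ℝ => P (-φ) - P φ) := hPnegint.sub hPint
  have hlint : Integrable (fun φ : ℝ =>
      Real.log 2 * P φ + c * (P (-φ) - P φ)) :=
    (hPint.const_mul _).add (hsub.const_mul _)
  have hle := integral_mono hlint hint hmono
  have heq : ∫ φ : ℝ, (Real.log 2 * P φ + c * (P (-φ) - P φ))
      = Real.log 2 := by
    rw [integral_add (hPint.const_mul _) (hsub.const_mul _),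
      integral_const_mul, integral_const_mul, integral_sub hPnegint hPint,
      hPone, hPnegone]
    ring
  rw [heq] at hle
  exact hle
end

section
/- Let f : (0,∞) → ℝ be convex with f(1) = 0 such that x ↦ f(x) + ln(1+x) is convex on (0,∞). Let P : ℝ → ℝ be a probability density function with P(φ) > 0 for all φ ∈ ℝ and ∫_ℝ P(φ) dφ = 1, and assume all the integrals below exist. Define the differential Shannon entropy H[P] = −∫_ℝ P(φ) ln P(φ) dφ, the absolute-value density P_{|Φ|}(φ) = P(φ) + P(−φ) for φ > 0, the symmetry entropy Λ[P] = H[P] − H[P_{|Φ|}] with H[P_{|Φ|}] = −∫_0^∞ P_{|Φ|}(φ) ln P_{|Φ|}(φ) dφ, and the f-divergence D_f[P(Φ) ∥ P(−Φ)] = ∫_ℝ P(−φ) f(P(φ)/P(−φ)) dφ. Then D_f[P(Φ) ∥ P(−Φ)] + Λ[P] ≥ ln 2. -/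
open MeasureTheory

/-- Differential Shannon entropy of a density `P` on `ℝ`. -/
noncomputable def diffEntropy (P : ℝ → ℝ) : ℝ :=
  -∫ φ : ℝ, P φ * Real.log (P φ)

/-- Differential Shannon entropy of the absolute-value density
`P_{|Φ|}(φ) = P(φ) + P(−φ)`, `φ > 0`. -/
noncomputable def diffAbsEntropy (P : ℝ → ℝ) : ℝ :=
  -∫ φ in Set.Ioi (0 : ℝ), (P φ + P (-φ)) * Real.log (P φ + P (-φ))

/-- Symmetry entropy `Λ[P] = H[P] − H[P_{|Φ|}]` for densities. -/
noncomputable def diffSymmetryEntropy (P : ℝ → ℝ) : ℝ :=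
  diffEntropy P - diffAbsEntropy P

/-- `f`-divergence `D_f[P(Φ) ∥ P(−Φ)] = ∫_ℝ P(−φ) f(P(φ)/P(−φ)) dφ` for a
density `P` on `ℝ`. -/
noncomputable def diffFDivergence (f : ℝ → ℝ) (P : ℝ → ℝ) : ℝ :=
  ∫ φ : ℝ, P (-φ) * f (P φ / P (-φ))

/-- Splitting an integral over `ℝ` into `(0,∞)` plus the reflection. -/
lemma reflect_integral (G : ℝ → ℝ) (hG : Integrable G) :
    ∫ x : ℝ, G x = (∫ x in Set.Ioi (0 : ℝ), G x) + ∫ x in Set.Ioi (0 : ℝ), G (-x) := by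
  have h1 : (∫ x in Set.Ioi (0 : ℝ), G (-x)) = ∫ x in Set.Iic (0 : ℝ), G x := by
    simpa using integral_comp_neg_Ioi (0 : ℝ) G
  rw [h1, add_comm]
  exact (intervalIntegral.integral_Iic_add_Ioi hG.integrableOn hG.integrableOn).symm

/-- The pointwise key inequality. -/
lemma key_ineq_s15 (f : ℝ → ℝ) (hf1 : f 1 = 0)
    (hconv : ConvexOn ℝ (Set.Ioi (0 : ℝ)) (fun x => f x + Real.log (1 + x)))
    (a b : ℝ) (ha : 0 < a) (hb : 0 < b) :
    (a + b) * Real.log 2 ≤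
      b * f (a / b) + a * f (b / a)
        + ((a + b) * Real.log (a + b) - a * Real.log a - b * Real.log b) := by
  set g : ℝ → ℝ := fun x => f x + Real.log (1 + x) with hg
  have hab : 0 < a + b := by linarith
  have hx : a / b ∈ Set.Ioi (0 : ℝ) := div_pos ha hb
  have hy : b / a ∈ Set.Ioi (0 : ℝ) := div_pos hb ha
  have hμ : (0 : ℝ) ≤ b / (a + b) := le_of_lt (div_pos hb hab)
  have hν : (0 : ℝ) ≤ a / (a + b) := le_of_lt (div_pos ha hab)
  have hμν : b / (a + b) + a / (a + b) = 1 := by field_simp; ring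
  have hcomb := hconv.2 hx hy hμ hν hμν
  have hpt : (b / (a + b)) • (a / b) + (a / (a + b)) • (b / a) = 1 := by
    simp only [smul_eq_mul]
    field_simp
  rw [hpt] at hcomb
  have hg1 : g 1 = Real.log 2 := by
    norm_num [hg, hf1]
  rw [hg1] at hcomb
  -- multiply by (a+b)
  have h2 : (a + b) * Real.log 2 ≤ b * g (a / b) + a * g (b / a) := by
    have := mul_le_mul_of_nonneg_left hcomb (le_of_lt hab)
    calc (a + b) * Real.log 2 ≤ (a + b) * ((b / (a + b)) • g (a / b) + (a / (a + b)) • g (b / a)) := this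
      _ = b * g (a / b) + a * g (b / a) := by
          simp only [smul_eq_mul]
          field_simp
  have e1 : b * g (a / b) = b * f (a / b) + b * (Real.log (a + b) - Real.log b) := by
    have : (1 : ℝ) + a / b = (a + b) / b := by field_simp; ring
    simp only [hg]
    rw [this, Real.log_div (by positivity) hb.ne']
    ring
  have e2 : a * g (b / a) = a * f (b / a) + a * (Real.log (a + b) - Real.log a) := by
    have : (1 : ℝ) + b / a = (a + b) / a := by field_simp
    simp only [hg]
    rw [this, Real.log_div (by positivity) ha.ne']
    ring
  rw [e1, e2] at h2
  nlinarith [h2]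

/-- continuous thermodynamic uncertainty relation. For `f` convex
on `(0,∞)` with `f(1) = 0` such that `x ↦ f(x) + ln(1+x)` is convex on `(0,∞)`,
and a strictly positive probability density `P` on `ℝ` (all integrals assumed to
exist), `D_f[P(Φ) ∥ P(−Φ)] + Λ[P] ≥ ln 2`. -/
theorem diffFDivergence_add_symmetryEntropy_ge
    (f : ℝ → ℝ) (hf : ConvexOn ℝ (Set.Ioi (0 : ℝ)) f) (hf1 : f 1 = 0)
    (hconv : ConvexOn ℝ (Set.Ioi (0 : ℝ)) (fun x => f x + Real.log (1 + x)))
    (P : ℝ → ℝ) (hPmeas : Measurable P) (hPpos : ∀ φ, 0 < P φ)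
    (hPint : Integrable P) (hPone : ∫ φ : ℝ, P φ = 1)
    (hHint : Integrable (fun φ : ℝ => P φ * Real.log (P φ)))
    (hHabsint : IntegrableOn
      (fun φ : ℝ => (P φ + P (-φ)) * Real.log (P φ + P (-φ))) (Set.Ioi (0 : ℝ)))
    (hDint : Integrable (fun φ : ℝ => P (-φ) * f (P φ / P (-φ)))) :
    diffFDivergence f P + diffSymmetryEntropy P ≥ Real.log 2 := by
  classical
  set D : ℝ → ℝ := fun φ => P (-φ) * f (P φ / P (-φ)) with hD
  set E : ℝ → ℝ := fun φ => P φ * Real.log (P φ) with hE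
  set Q : ℝ → ℝ := fun φ => (P φ + P (-φ)) * Real.log (P φ + P (-φ)) with hQ
  have hDneg : Integrable (fun φ => D (-φ)) := hDint.comp_neg
  have hEneg : Integrable (fun φ => E (-φ)) := hHint.comp_neg
  have hPneg : Integrable (fun φ => P (-φ)) := hPint.comp_neg
  -- split integrals
  have hsplitD : ∫ φ : ℝ, D φ
      = (∫ φ in Set.Ioi (0 : ℝ), D φ) + ∫ φ in Set.Ioi (0 : ℝ), D (-φ) :=
    reflect_integral D hDint
  have hsplitE : ∫ φ : ℝ, E φ
      = (∫ φ in Set.Ioi (0 : ℝ), E φ) + ∫ φ in Set.Ioi (0 : ℝ), E (-φ) :=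
    reflect_integral E hHint
  have hsplitP : (1 : ℝ) = ∫ φ in Set.Ioi (0 : ℝ), (P φ + P (-φ)) := by
    rw [← hPone, reflect_integral P hPint,
      ← integral_add hPint.integrableOn hPneg.integrableOn]
  -- goal rewriting
  have i1 : IntegrableOn (fun φ => D φ + D (-φ)) (Set.Ioi (0:ℝ)) :=
    hDint.integrableOn.add hDneg.integrableOn
  have i2 : IntegrableOn (fun φ => D φ + D (-φ) - E φ) (Set.Ioi (0:ℝ)) :=
    i1.sub hHint.integrableOn
  have i3 : IntegrableOn (fun φ => D φ + D (-φ) - E φ - E (-φ)) (Set.Ioi (0:ℝ)) :=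
    i2.sub hEneg.integrableOn
  have i4 : IntegrableOn (fun φ => D φ + D (-φ) - E φ - E (-φ) + Q φ) (Set.Ioi (0:ℝ)) :=
    i3.add hHabsint
  have hsum : (∫ φ in Set.Ioi (0:ℝ), (D φ + D (-φ) - E φ - E (-φ) + Q φ))
      = (∫ φ in Set.Ioi (0:ℝ), D φ) + (∫ φ in Set.Ioi (0:ℝ), D (-φ))
        - (∫ φ in Set.Ioi (0:ℝ), E φ) - (∫ φ in Set.Ioi (0:ℝ), E (-φ))
        + ∫ φ in Set.Ioi (0:ℝ), Q φ := by
    rw [integral_add i3 hHabsint, integral_sub i2 hEneg.integrableOn,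
      integral_sub i1 hHint.integrableOn, integral_add hDint.integrableOn hDneg.integrableOn]
  have hLHS : diffFDivergence f P + diffSymmetryEntropy P
      = ∫ φ in Set.Ioi (0 : ℝ),
          (D φ + D (-φ) - E φ - E (-φ) + Q φ) := by
    rw [diffFDivergence, diffSymmetryEntropy, diffEntropy, diffAbsEntropy, hsum]
    have h1 : (∫ φ : ℝ, P (-φ) * f (P φ / P (-φ))) = ∫ φ : ℝ, D φ := rfl
    have h2 : (∫ φ : ℝ, P φ * Real.log (P φ)) = ∫ φ : ℝ, E φ := rfl
    have h3 : (∫ φ in Set.Ioi (0:ℝ), (P φ + P (-φ)) * Real.log (P φ + P (-φ)))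
        = ∫ φ in Set.Ioi (0:ℝ), Q φ := rfl
    rw [h1, h2, h3, hsplitD, hsplitE]
    ring
  rw [hLHS, ge_iff_le]
  have hRHS : Real.log 2 = ∫ φ in Set.Ioi (0 : ℝ), (P φ + P (-φ)) * Real.log 2 := by
    rw [integral_mul_const, ← hsplitP, one_mul]
  rw [hRHS]
  apply setIntegral_mono_on
  · exact ((hPint.integrableOn.add hPneg.integrableOn).mul_const _)
  · exact ((((hDint.integrableOn.add hDneg.integrableOn).sub
      hHint.integrableOn).sub hEneg.integrableOn).add hHabsint)
  · exact measurableSet_Ioi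
  · intro φ _
    have key := key_ineq_s15 f hf1 hconv (P φ) (P (-φ)) (hPpos φ) (hPpos (-φ))
    simp only [hD, hE, hQ, neg_neg]
    nlinarith [key]
end
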